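/- arXiv:2405.00295 — 2 statements merged into one kernel-verified Lean document; each statement's English description precedes it below -/
import Mathlib

section
/- In the PoSP protocol with n validators, a validator that does not collude with the asserter has a strict dominant strategy to output the correct result. Precisely: let n be a positive integer and let R_V, C, S be real numbers with S > n·C and R_V/n − C > −S. Suppose the validator's payoffs satisfy: u_hc ≥ R_V/n − C when the validator is correct and the asserter is correct; u_hi ≥ R_V/n − C + S/n when the validator is correct and the asserter is incorrect; u_dc = −S when the validator is incorrect and the asserter is correct; u_di ≤ R_V/n when the validator is incorrect and the asserter is incorrect. Then u_hc > u_dc and u_hi > u_di, i.e., outputting the correct result yields a strictly higher payoff against every strategy of the asserter. -/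
/-- A non-colluding validator in the PoSP protocol with `n` validators has a
strict dominant strategy to output the correct result. -/
theorem posp_validator_dominant_strategy
    (n : ℕ) (hn : 0 < n)
    (R_V C S : ℝ)
    (hS : S > n * C)
    (hRV : R_V / n - C > -S)
    (u_hc u_hi u_dc u_di : ℝ)
    (h_hc : u_hc ≥ R_V / n - C)
    (h_hi : u_hi ≥ R_V / n - C + S / n)
    (h_dc : u_dc = -S)
    (h_di : u_di ≤ R_V / n) :
    u_hc > u_dc ∧ u_hi > u_di := by
  have h_share : C < S / n := (lt_div_iff₀' (Nat.cast_pos.2 hn)).2 hS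
  constructor <;> linarith
end

section
/- (Main theorem, payoff form.) Let n be a positive integer, p, ρ, r ∈ [0,1] with ρ ≤ r, and let R_A, R_V, C, S, U_1, U_2 be real numbers with R_V ≥ 0 and U_2 + S ≥ 0. Let E_0, E_1, …, E_n be nonnegative real numbers and set E = Σ_{i=0}^{n} C(n,i)·ρ^i·(1−ρ)^{n−i}·E_i. If R_A + p·S − (1−p)·U_1 − C > p·r^n·(U_2 + S), then the honest asserter's expected payoff strictly exceeds the upper bound on the dishonest asserter's expected payoff: (1−p)(R_A − C) + p((R_V/n)·E + R_A − C) > (1−p)·U_1 + p·ρ^n·U_2 + p·Σ_{i=0}^{n−1} C(n,i)·ρ^i·(1−ρ)^{n−i}·((R_V/n)·E_i − S). -/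
/-!
Since the binomial weights `C(n,i) ρ^i (1-ρ)^(n-i)` sum to one, the two expected payoffs differ by
`R_A + p S - (1-p) U₁ - C - p ρ^n (U₂ + S) + p (R_V/n) ρ^n E_n`: the honest asserter collects the
validator reward on the event `m = n` as well, while the dishonest one is left with `ρ^n U₂`
there. The hypothesis bounds the first part below by `p r^n (U₂ + S) ≥ p ρ^n (U₂ + S)`, and the
last term is nonnegative.
-/

open Finset

section BinomialWeights

variable {R : Type*} [CommRing R]

theorem sum_range_choose_mul_pow_mul_one_sub_pow (x : R) (n : ℕ) :
    ∑ i ∈ range (n + 1), (n.choose i : R) * x ^ i * (1 - x) ^ (n - i) = 1 := by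
  have h := add_pow x (1 - x) n
  rw [add_sub_cancel, one_pow] at h
  exact (sum_congr rfl fun i _ ↦ by ring).trans h.symm

theorem sum_range_choose_mul_pow_mul_one_sub_pow_of_lt (x : R) (n : ℕ) :
    ∑ i ∈ range n, (n.choose i : R) * x ^ i * (1 - x) ^ (n - i) = 1 - x ^ n := by
  have h := sum_range_choose_mul_pow_mul_one_sub_pow x n
  rw [sum_range_succ, Nat.choose_self, Nat.sub_self] at h
  linear_combination h

end BinomialWeights

theorem posp_payoff_gap (n : ℕ) (p ρ R_A a C S U₁ U₂ : ℝ) (E : ℕ → ℝ) :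
    (1 - p) * (R_A - C) +
        p * (a * ∑ i ∈ range (n + 1), (n.choose i : ℝ) * ρ ^ i * (1 - ρ) ^ (n - i) * E i
          + R_A - C) -
      ((1 - p) * U₁ + p * ρ ^ n * U₂ +
        p * ∑ i ∈ range n, (n.choose i : ℝ) * ρ ^ i * (1 - ρ) ^ (n - i) * (a * E i - S)) =
      R_A + p * S - (1 - p) * U₁ - C - p * ρ ^ n * (U₂ + S) + p * a * ρ ^ n * E n := by
  have hdist : ∑ i ∈ range n, (n.choose i : ℝ) * ρ ^ i * (1 - ρ) ^ (n - i) * (a * E i - S) =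
      a * ∑ i ∈ range n, (n.choose i : ℝ) * ρ ^ i * (1 - ρ) ^ (n - i) * E i -
        S * ∑ i ∈ range n, (n.choose i : ℝ) * ρ ^ i * (1 - ρ) ^ (n - i) := by
    rw [mul_sum, mul_sum, ← sum_sub_distrib]
    exact sum_congr rfl fun i _ ↦ by ring
  rw [hdist, sum_range_choose_mul_pow_mul_one_sub_pow_of_lt, sum_range_succ]
  simp only [Nat.choose_self, Nat.cast_one, Nat.sub_self, pow_zero]
  ring

open Finset in
theorem posp_main_theorem_general
    (n : ℕ)
    (p ρ r : ℝ)
    (hp : p ∈ Set.Icc (0:ℝ) 1) (hρ : ρ ∈ Set.Icc (0:ℝ) 1)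
    (hρr : ρ ≤ r)
    (R_A R_V C S U₁ U₂ : ℝ) (hRV : 0 ≤ R_V) (hU2S : 0 ≤ U₂ + S)
    (E : ℕ → ℝ) (hE : ∀ i, 0 ≤ E i) (Ek : ℝ)
    (hEk : Ek = ∑ i ∈ range (n + 1),
      (n.choose i : ℝ) * ρ ^ i * (1 - ρ) ^ (n - i) * E i)
    (hcond : R_A + p * S - (1 - p) * U₁ - C > p * r ^ n * (U₂ + S)) :
    (1 - p) * (R_A - C) + p * ((R_V / n) * Ek + R_A - C) >
      (1 - p) * U₁ + p * ρ ^ n * U₂ +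
        p * ∑ i ∈ range n,
          (n.choose i : ℝ) * ρ ^ i * (1 - ρ) ^ (n - i) * ((R_V / n) * E i - S) := by
  obtain ⟨hp₀, -⟩ := hp
  obtain ⟨hρ₀, -⟩ := hρ
  have hpow : p * ρ ^ n * (U₂ + S) ≤ p * r ^ n * (U₂ + S) := by gcongr
  have hreward : 0 ≤ p * (R_V / n) * ρ ^ n * E n := mul_nonneg (by positivity) (hE n)
  rw [gt_iff_lt, ← sub_pos, hEk, posp_payoff_gap]
  linarith

open Finset in
/-- Main theorem of the PoSP protocol, payoff form: if the sufficient condition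
holds, the honest asserter's expected payoff strictly exceeds the upper bound on
the dishonest asserter's expected payoff. -/
theorem posp_main_theorem
    (n : ℕ) (hn : 0 < n)
    (p ρ r : ℝ)
    (hp : p ∈ Set.Icc (0:ℝ) 1) (hρ : ρ ∈ Set.Icc (0:ℝ) 1)
    (hr : r ∈ Set.Icc (0:ℝ) 1) (hρr : ρ ≤ r)
    (R_A R_V C S U₁ U₂ : ℝ) (hRV : 0 ≤ R_V) (hU2S : 0 ≤ U₂ + S)
    (E : ℕ → ℝ) (hE : ∀ i, 0 ≤ E i) (Ek : ℝ)
    (hEk : Ek = ∑ i ∈ range (n + 1),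
      (n.choose i : ℝ) * ρ ^ i * (1 - ρ) ^ (n - i) * E i)
    (hcond : R_A + p * S - (1 - p) * U₁ - C > p * r ^ n * (U₂ + S)) :
    (1 - p) * (R_A - C) + p * ((R_V / n) * Ek + R_A - C) >
      (1 - p) * U₁ + p * ρ ^ n * U₂ +
        p * ∑ i ∈ range n,
          (n.choose i : ℝ) * ρ ^ i * (1 - ρ) ^ (n - i) * ((R_V / n) * E i - S) :=
  posp_main_theorem_general n p ρ r hp hρ hρr R_A R_V C S U₁ U₂ hRV hU2S E hE Ek hEk hcond
end
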